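/- Let X be a Banach space with a 1-unconditional basis (e_i). Suppose (w_k) and (v_k) are normalized sequences in X with ‖w_k − v_k‖ ≤ 16^{-k} for all k. Then for every choice of scalars (c_k) ⊆ [−1,1], writing w = Σ_k c_k w_k, v = Σ_k c_k v_k, and I = {i ∈ supp w : |w(i)| ≥ 2|v(i)|}, one has ‖Σ_{i∈I} w(i) e_i‖ ≤ 1/4. Consequently, if ‖w‖ = 1 then ‖Σ_{i ∈ supp w, |v(i)|/2 < |w(i)| < 2|v(i)|} w(i) e_i‖ ≥ 1/4. -/

import Mathlib

open scoped BigOperators Classical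
open Filter Topology

structure RSchauderBasis (X : Type*) [NormedAddCommGroup X] [NormedSpace ℝ X] where
  e : ℕ → X
  coord : ℕ → X →L[ℝ] ℝ
  ortho : ∀ i j, coord i (e j) = if i = j then 1 else 0
  expansion : ∀ x : X, HasSum (fun i => coord i x • e i) x

section Defs

variable {X : Type*} [NormedAddCommGroup X] [NormedSpace ℝ X]

def RSchauderBasis.IsUnconditionalWith (b : RSchauderBasis X) (C : ℝ) : Prop :=
  ∀ x y : X, (∀ i, |b.coord i y| ≤ |b.coord i x|) → ‖y‖ ≤ C * ‖x‖

def RSchauderBasis.supp (b : RSchauderBasis X) (x : X) : Set ℕ := {i | b.coord i x ≠ 0}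

def StrictlySingular {E F : Type*} [NormedAddCommGroup E] [NormedSpace ℝ E]
    [NormedAddCommGroup F] [NormedSpace ℝ F] (T : E →L[ℝ] F) : Prop :=
  ∀ Y : Submodule ℝ E, ¬ FiniteDimensional ℝ Y →
    ¬ ∃ c : ℝ, 0 < c ∧ ∀ y ∈ Y, c * ‖y‖ ≤ ‖T y‖

def RSchauderBasis.TightBySupport (b : RSchauderBasis X) : Prop :=
  ∀ Y Z : Submodule ℝ X, IsClosed (Y : Set X) → IsClosed (Z : Set X) →
    ¬ FiniteDimensional ℝ Y → ¬ FiniteDimensional ℝ Z →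
    (∀ y ∈ Y, ∀ z ∈ Z, ∀ i, b.coord i y ≠ 0 → b.coord i z = 0) →
    IsEmpty (Y ≃L[ℝ] Z)

def RSchauderBasis.IsBlockSequence (b : RSchauderBasis X) (x : ℕ → X) : Prop :=
  (∀ n, x n ≠ 0) ∧ (∀ n, (b.supp (x n)).Finite) ∧
    ∀ m n i j, m < n → b.coord i (x m) ≠ 0 → b.coord j (x n) ≠ 0 → i < j

def closedSpan (x : ℕ → X) : Submodule ℝ X :=
  (Submodule.span ℝ (Set.range x)).topologicalClosure

def RSchauderBasis.IsDiagonal (b : RSchauderBasis X) (D : X →L[ℝ] X) : Prop :=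
  ∀ i, ∃ lam : ℝ, D (b.e i) = lam • b.e i

def IsL1Average (b : RSchauderBasis X) (x : X) (n : ℕ) (c : ℝ) : Prop :=
  0 < n ∧ 1 ≤ c ∧ ∃ xs : Fin n → X,
    (∀ i, ‖xs i‖ ≤ 1) ∧
    (∀ i j : Fin n, i < j → ∀ p q, b.coord p (xs i) ≠ 0 → b.coord q (xs j) ≠ 0 → p < q) ∧
    x = (n : ℝ)⁻¹ • ∑ i, xs i ∧ 1 / c ≤ ‖x‖

end Defs

/-!
Since `|c k| ≤ 1`, the tails give `‖w - v‖ ≤ Σ 16^{-(k+1)} = 1/15`. Off the band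
`|v(i)|/2 < |w(i)| < 2|v(i)|` one has `|w(i)| ≤ 2|w(i) - v(i)|`, so by 1-unconditionality
both the part of `w` on `I` and the part of `w` off the band have norm at most `2/15 < 1/4`;
when `‖w‖ = 1` the part on the band therefore has norm at least `1 - 2/15 > 1/4`.
-/

lemma abs_le_two_mul_abs_sub {a b : ℝ} (h : ¬(|b| / 2 < |a| ∧ |a| < 2 * |b|)) :
    |a| ≤ 2 * |a - b| := by
  have hab := abs_sub_abs_le_abs_sub a b
  have hba := abs_sub_abs_le_abs_sub b a
  rw [abs_sub_comm b a] at hba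
  rw [not_and_or, not_lt, not_lt] at h
  rcases h with h | h <;> linarith

lemma hasSum_one_div_sixteen_pow_succ :
    HasSum (fun k : ℕ => (1 / 16 : ℝ) ^ (k + 1)) (1 / 15) := by
  have h := (hasSum_geometric_of_lt_one (r := (1 / 16 : ℝ)) (by norm_num) (by norm_num)).mul_left
    (1 / 16)
  simp only [← pow_succ'] at h
  rwa [show (1 / 16 : ℝ) * (1 - 1 / 16)⁻¹ = 1 / 15 by norm_num] at h

lemma norm_sub_le_of_hasSum_smul {E : Type*} [SeminormedAddCommGroup E] [NormedSpace ℝ E]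
    {c : ℕ → ℝ} {x y : ℕ → E} {ε : ℕ → ℝ} {s : ℝ} {a b : E} (hc : ∀ k, |c k| ≤ 1)
    (hxy : ∀ k, ‖x k - y k‖ ≤ ε k) (hε : HasSum ε s)
    (ha : HasSum (fun k => c k • x k) a) (hb : HasSum (fun k => c k • y k) b) :
    ‖a - b‖ ≤ s := by
  have hdiff : HasSum (fun k => c k • (x k - y k)) (a - b) := by
    simpa only [smul_sub] using ha.sub hb
  refine hdiff.norm_le_of_bounded hε fun k => ?_
  rw [norm_smul, Real.norm_eq_abs]
  exact (mul_le_of_le_one_left (norm_nonneg _) (hc k)).trans (hxy k)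

lemma RSchauderBasis.norm_le_of_abs_coord_le_mul {X : Type*} [NormedAddCommGroup X]
    [NormedSpace ℝ X] {b : RSchauderBasis X} (hb : b.IsUnconditionalWith 1) {x u : X} {K : ℝ}
    (hK : 0 ≤ K) (hu : ∀ i, |b.coord i u| ≤ K * |b.coord i x|) : ‖u‖ ≤ K * ‖x‖ := by
  have h := hb (K • x) u fun i => by
    rw [map_smul, smul_eq_mul, abs_mul, abs_of_nonneg hK]
    exact hu i
  rwa [one_mul, norm_smul, Real.norm_of_nonneg hK] at h

theorem stmt8_general {X : Type*} [NormedAddCommGroup X] [NormedSpace ℝ X]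
    (b : RSchauderBasis X) (hb : b.IsUnconditionalWith 1)
    (wseq vseq : ℕ → X)
    (hclose : ∀ k, ‖wseq k - vseq k‖ ≤ (1 / 16 : ℝ) ^ (k + 1))
    (c : ℕ → ℝ) (hc : ∀ k, |c k| ≤ 1)
    (w v : X) (hws : HasSum (fun k => c k • wseq k) w)
    (hvs : HasSum (fun k => c k • vseq k) v) :
    (∀ u : X, (∀ i, b.coord i u =
        if b.coord i w ≠ 0 ∧ 2 * |b.coord i v| ≤ |b.coord i w|
        then b.coord i w else 0) → ‖u‖ ≤ 1 / 4)
    ∧ (‖w‖ = 1 → ∀ u : X, (∀ i, b.coord i u =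
        if b.coord i w ≠ 0 ∧ |b.coord i v| / 2 < |b.coord i w| ∧
            |b.coord i w| < 2 * |b.coord i v|
        then b.coord i w else 0) → 1 / 4 ≤ ‖u‖) := by
  have hwv : ‖w - v‖ ≤ 1 / 15 :=
    norm_sub_le_of_hasSum_smul hc hclose hasSum_one_div_sixteen_pow_succ hws hvs
  have hdominated : ∀ u : X, (∀ i, |b.coord i u| ≤ 2 * |b.coord i (w - v)|) → ‖u‖ ≤ 2 / 15 :=
    fun u hu => (b.norm_le_of_abs_coord_le_mul hb zero_le_two hu).trans (by linarith)
  refine ⟨fun u hu => (hdominated u fun i => ?_).trans (by norm_num), fun hw u hu => ?_⟩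
  · rw [hu i, map_sub]
    split_ifs with h
    · exact abs_le_two_mul_abs_sub fun h' => h.2.not_gt h'.2
    · simp
  · have hrest : ‖w - u‖ ≤ 2 / 15 := hdominated (w - u) fun i => by
      rw [map_sub, map_sub, hu i]
      split_ifs with h
      · simp
      · by_cases hw0 : b.coord i w = 0
        · simp [hw0]
        · simpa using abs_le_two_mul_abs_sub fun h' => h ⟨hw0, h'⟩
    linarith [norm_sub_norm_le w u]

/-- if (w_k), (v_k) are normalized with ‖w_k − v_k‖ ≤ 16^{-k}
(indices starting at 1) then for coefficients in [−1,1] the part of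
w = Σ c_k w_k supported where |w(i)| ≥ 2|v(i)| has norm ≤ 1/4, and if ‖w‖ = 1
the part supported where |v(i)|/2 < |w(i)| < 2|v(i)| has norm ≥ 1/4. -/
theorem stmt8 {X : Type*} [NormedAddCommGroup X] [NormedSpace ℝ X] [CompleteSpace X]
    (b : RSchauderBasis X) (hb : b.IsUnconditionalWith 1)
    (wseq vseq : ℕ → X) (hwn : ∀ k, ‖wseq k‖ = 1) (hvn : ∀ k, ‖vseq k‖ = 1)
    (hclose : ∀ k, ‖wseq k - vseq k‖ ≤ (1 / 16 : ℝ) ^ (k + 1))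
    (c : ℕ → ℝ) (hc : ∀ k, |c k| ≤ 1)
    (w v : X) (hws : HasSum (fun k => c k • wseq k) w)
    (hvs : HasSum (fun k => c k • vseq k) v) :
    (∀ u : X, (∀ i, b.coord i u =
        if b.coord i w ≠ 0 ∧ 2 * |b.coord i v| ≤ |b.coord i w|
        then b.coord i w else 0) → ‖u‖ ≤ 1 / 4)
    ∧ (‖w‖ = 1 → ∀ u : X, (∀ i, b.coord i u =
        if b.coord i w ≠ 0 ∧ |b.coord i v| / 2 < |b.coord i w| ∧
            |b.coord i w| < 2 * |b.coord i v|
        then b.coord i w else 0) → 1 / 4 ≤ ‖u‖) :=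
  stmt8_general b hb wseq vseq hclose c hc w v hws hvs
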